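/- Let A ∈ ℝ^{m×n} have full column rank n, b ∈ ℝ^m, c ∈ ℝⁿ, x = (AᵀA)⁻¹(Aᵀb + c), r = b − Ax, A† = (AᵀA)⁻¹Aᵀ. Let vec: ℝ^{m×n} → ℝ^{mn} be the operator stacking the columns of a matrix (so that vec(PXQ) = (Qᵀ⊗P)vec(X)), and let L_T ∈ ℝ^{nm×mn} be the permutation matrix such that vec(Eᵀ) = L_T vec(E) for all E ∈ ℝ^{m×n}. Define the n×(mn+m+n) block matrix M = [(rᵀ⊗(AᵀA)⁻¹)L_T − xᵀ⊗A†, A†, (AᵀA)⁻¹], whose first block represents the map E ↦ (AᵀA)⁻¹Eᵀr − A†Ex. Then M Mᵀ = M̄, where M̄ = (1 + ‖r‖²)(AᵀA)⁻² + (1 + ‖x‖²)(AᵀA)⁻¹ − 2 sym(B), B = A† r xᵀ (AᵀA)⁻¹ and sym(B) = (B + Bᵀ)/2; consequently the spectral norm of M equals sqrt(‖M̄‖). -/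

import Mathlib

open Matrix

/-!
Multiplying by the commutation matrix `L_T` only swaps the two column indices, so with
`S = (AᵀA)⁻¹` and `A† = S Aᵀ` the first block of `M` has entry `r_e S_{ia} - x_a A†_{ie}` in
column `(a, e)`. Then `M Mᵀ` is the sum of the Gram matrices of the three blocks: the first one
is `‖r‖² S² + ‖x‖² A†A†ᵀ - B - Bᵀ` by expanding the Kronecker products, and `A†A†ᵀ = S`.
The norm statement is the C*-identity `‖M Mᵀ‖ = ‖M‖²` for the spectral norm, once the supremum
of the ratios `‖M y‖ / ‖y‖` is identified with the operator norm of `M` on Euclidean space.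
-/

/-- Euclidean norm of a vector. -/
noncomputable def euclNorm {k : Type*} [Fintype k] (v : k → ℝ) : ℝ :=
  Real.sqrt (∑ i, v i ^ 2)

/-- Spectral (Euclidean operator) norm of a matrix, as the supremum of
`‖M y‖ / ‖y‖` over nonzero `y`. -/
noncomputable def specNorm {k l : Type*} [Fintype k] [Fintype l]
    (M : Matrix k l ℝ) : ℝ :=
  sSup {t : ℝ | ∃ y : l → ℝ, y ≠ 0 ∧ t = euclNorm (M *ᵥ y) / euclNorm y}

/-- The column-stacking operator `vec : ℝ^{m×n} → ℝ^{mn}`: the vector of a matrix `E`,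
indexed by pairs `(column, row)`, so that `vec(PXQ) = (Qᵀ ⊗ P) vec(X)` for the Kronecker
product indexed accordingly. -/
def vecC {m n : ℕ} (E : Matrix (Fin m) (Fin n) ℝ) : Fin n × Fin m → ℝ :=
  fun p => E p.2 p.1

open scoped Matrix.Norms.L2Operator

theorem ContinuousLinearMap.sSup_ratio_eq_norm {E F : Type*} [NormedAddCommGroup E]
    [NormedSpace ℝ E] [NormedAddCommGroup F] [NormedSpace ℝ F] (f : E →L[ℝ] F) :
    sSup {t : ℝ | ∃ y : E, y ≠ 0 ∧ t = ‖f y‖ / ‖y‖} = ‖f‖ := by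
  rw [← f.sSup_sphere_eq_norm]
  congr 1
  ext t
  constructor
  · rintro ⟨y, hy, rfl⟩
    refine ⟨‖y‖⁻¹ • y, by simp [norm_smul, hy], ?_⟩
    simp only [map_smul, norm_smul, norm_inv, norm_norm]
    rw [div_eq_inv_mul]
  · rintro ⟨z, hz, rfl⟩
    rw [mem_sphere_zero_iff_norm] at hz
    exact ⟨z, norm_ne_zero_iff.mp (by simp [hz]), by simp [hz]⟩

lemma euclNorm_eq_norm {k : Type*} [Fintype k] (v : k → ℝ) :
    euclNorm v = ‖WithLp.toLp 2 v‖ := by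
  simp [euclNorm, EuclideanSpace.norm_eq]

lemma sq_euclNorm {k : Type*} [Fintype k] (v : k → ℝ) : euclNorm v ^ 2 = v ⬝ᵥ v := by
  rw [euclNorm, Real.sq_sqrt (by positivity)]
  simp [dotProduct, sq]

lemma specNorm_eq_l2_opNorm {k l : Type*} [Fintype k] [Fintype l] [DecidableEq l]
    (M : Matrix k l ℝ) : specNorm M = ‖M‖ := by
  rw [l2_opNorm_def, ← ContinuousLinearMap.sSup_ratio_eq_norm, specNorm]
  congr 1
  ext t
  simp only [euclNorm_eq_norm]
  constructor
  · rintro ⟨y, hy, rfl⟩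
    exact ⟨WithLp.toLp 2 y, by simpa using hy, rfl⟩
  · rintro ⟨y, hy, rfl⟩
    exact ⟨y.ofLp, by simpa using hy, rfl⟩

namespace Matrix

lemma isUnit_of_rank_eq_card {K n : Type*} [Field K] [Fintype n] [DecidableEq n]
    {A : Matrix n n K} (h : A.rank = Fintype.card n) : IsUnit A := by
  rw [← mulVec_surjective_iff_isUnit]
  have range_eq_top : LinearMap.range A.mulVecLin = ⊤ :=
    Submodule.eq_top_of_finrank_eq (by rw [Module.finrank_fintype_fun_eq_card]; exact h)
  exact LinearMap.range_eq_top.mp range_eq_top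

section Gram

variable {R m n : Type*} [CommRing R] [Fintype m] [Fintype n] [DecidableEq n]
  (A : Matrix m n R)

lemma transpose_inv_transpose_mul_self : ((Aᵀ * A)⁻¹)ᵀ = (Aᵀ * A)⁻¹ := by
  rw [transpose_nonsing_inv, transpose_mul, transpose_transpose]

lemma pinv_mul_transpose_pinv (hA : IsUnit (Aᵀ * A).det) :
    ((Aᵀ * A)⁻¹ * Aᵀ) * ((Aᵀ * A)⁻¹ * Aᵀ)ᵀ = (Aᵀ * A)⁻¹ := by
  rw [transpose_mul, transpose_transpose, transpose_inv_transpose_mul_self, Matrix.mul_assoc,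
    ← Matrix.mul_assoc Aᵀ, mul_nonsing_inv _ hA, Matrix.mul_one]

end Gram

lemma mul_commutation_apply {R ι α β : Type*} [NonAssocSemiring R] [Fintype α] [Fintype β]
    [DecidableEq α] [DecidableEq β]
    (N : Matrix ι (β × α) R) (L : Matrix (β × α) (α × β) R)
    (hL : ∀ p q, L p q = if p.1 = q.2 ∧ p.2 = q.1 then 1 else 0) (i : ι) (q : α × β) :
    (N * L) i q = N i q.swap := by
  have swap_iff (p : β × α) : (p.1 = q.2 ∧ p.2 = q.1) ↔ p = q.swap := by simp [Prod.ext_iff]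
  simp only [mul_apply, hL, mul_ite, mul_one, mul_zero, swap_iff, Finset.sum_ite_eq',
    Finset.mem_univ, if_true]

lemma kron_sub_kron_mul_transpose_self {R ι α β : Type*} [CommRing R] [Fintype α] [Fintype β]
    (S : Matrix ι α R) (P : Matrix ι β R) (u : β → R) (v : α → R) :
    (of fun i (q : α × β) => u q.2 * S i q.1 - v q.1 * P i q.2) *
      (of fun i (q : α × β) => u q.2 * S i q.1 - v q.1 * P i q.2)ᵀ
    = (u ⬝ᵥ u) • (S * Sᵀ) + (v ⬝ᵥ v) • (P * Pᵀ)
        - P * vecMulVec u v * Sᵀ - (P * vecMulVec u v * Sᵀ)ᵀ := by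
  rw [transpose_mul, transpose_mul, transpose_vecMulVec, transpose_transpose]
  ext i j
  simp only [mul_apply, transpose_apply, of_apply, Matrix.add_apply, Matrix.sub_apply,
    Matrix.smul_apply, smul_eq_mul, vecMulVec_apply, dotProduct, Fintype.sum_prod_type,
    Finset.sum_mul, Finset.mul_sum]
  rw [Finset.sum_comm (s := (Finset.univ : Finset β))]
  simp only [← Finset.sum_add_distrib, ← Finset.sum_sub_distrib]
  exact Finset.sum_congr rfl fun a _ => Finset.sum_congr rfl fun e _ => by ring

lemma l2_opNorm_mul_transpose_self {k l : Type*} [Fintype k] [Fintype l] [DecidableEq k]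
    [DecidableEq l] (M : Matrix k l ℝ) : ‖M * Mᵀ‖ = ‖M‖ * ‖M‖ := by
  have h := l2_opNorm_conjTranspose_mul_self Mᴴ
  rwa [conjTranspose_conjTranspose, l2_opNorm_conjTranspose,
    conjTranspose_eq_transpose_of_trivial] at h

end Matrix

theorem stmt16_general {m n : ℕ}
    (A : Matrix (Fin m) (Fin n) ℝ) (hA : A.rank = n)
    (x : Fin n → ℝ)
    (r : Fin m → ℝ)
    (LT : Matrix (Fin m × Fin n) (Fin n × Fin m) ℝ)
    (hLTperm : ∀ p q, LT p q = if p.1 = q.2 ∧ p.2 = q.1 then 1 else 0)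
    (K₁ : Matrix (Fin n) (Fin m × Fin n) ℝ)
    (hK₁ : K₁ = Matrix.of fun i p => r p.1 * (Aᵀ * A)⁻¹ i p.2)
    (K₂ : Matrix (Fin n) (Fin n × Fin m) ℝ)
    (hK₂ : K₂ = Matrix.of fun i p => x p.1 * ((Aᵀ * A)⁻¹ * Aᵀ) i p.2)
    (M : Matrix (Fin n) ((Fin n × Fin m) ⊕ (Fin m ⊕ Fin n)) ℝ)
    (hMblocks : M = Matrix.of fun i q =>
      Sum.elim (fun p => (K₁ * LT - K₂) i p)
        (Sum.elim (fun j => ((Aᵀ * A)⁻¹ * Aᵀ) i j) (fun j => (Aᵀ * A)⁻¹ i j)) q)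
    (B : Matrix (Fin n) (Fin n) ℝ)
    (hB : B = ((Aᵀ * A)⁻¹ * Aᵀ) * vecMulVec r x * (Aᵀ * A)⁻¹)
    (Mbar : Matrix (Fin n) (Fin n) ℝ)
    (hMbar : Mbar = (1 + euclNorm r ^ 2) • ((Aᵀ * A)⁻¹ * (Aᵀ * A)⁻¹)
        + (1 + euclNorm x ^ 2) • (Aᵀ * A)⁻¹
        - (2 : ℝ) • ((1 / 2 : ℝ) • (B + Bᵀ))) :
    M * Mᵀ = Mbar ∧ specNorm M = Real.sqrt (specNorm Mbar) := by
  set S := (Aᵀ * A)⁻¹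
  set Adag := (Aᵀ * A)⁻¹ * Aᵀ
  have hdet : IsUnit (Aᵀ * A).det := (isUnit_iff_isUnit_det _).mp <|
    isUnit_of_rank_eq_card (by rw [rank_transpose_mul_self, hA, Fintype.card_fin])
  have hM : M = fromCols (of fun i (q : Fin n × Fin m) => r q.2 * S i q.1 - x q.1 * Adag i q.2)
      (fromCols Adag S) := by
    ext i (q | j | j)
    · simp [hMblocks, hK₁, hK₂, mul_commutation_apply _ _ hLTperm]
    all_goals simp [hMblocks]
  have gram : M * Mᵀ = Mbar := by
    rw [hM, transpose_fromCols, fromCols_mul_fromRows, transpose_fromCols, fromCols_mul_fromRows,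
      kron_sub_kron_mul_transpose_self, pinv_mul_transpose_pinv _ hdet,
      transpose_inv_transpose_mul_self, ← hB, hMbar, sq_euclNorm, sq_euclNorm, smul_smul]
    module
  refine ⟨gram, ?_⟩
  rw [specNorm_eq_l2_opNorm, specNorm_eq_l2_opNorm, ← gram, l2_opNorm_mul_transpose_self,
    Real.sqrt_mul_self (norm_nonneg _)]

/-- Lemma 3.2 and Theorem 3.3: matrix form of the structured condition
number. Let `L_T` be the permutation (commutation) matrix with `vec(Eᵀ) = L_T vec(E)` for
all `E`, and let `M = [(rᵀ⊗(AᵀA)⁻¹)L_T − xᵀ⊗A†, A†, (AᵀA)⁻¹]`, whose first block represents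
the map `E ↦ (AᵀA)⁻¹Eᵀr − A†Ex` (here `rᵀ⊗(AᵀA)⁻¹` and `xᵀ⊗A†` are the Kronecker products
with the row vectors `rᵀ`, `xᵀ`, with the trivial index collapsed). Then `M Mᵀ = M̄`, where
`M̄ = (1 + ‖r‖²)(AᵀA)⁻² + (1 + ‖x‖²)(AᵀA)⁻¹ − 2 sym(B)` with `B = A† r xᵀ (AᵀA)⁻¹`;
consequently the spectral norm of `M` equals `sqrt(‖M̄‖)`. -/
theorem stmt16 {m n : ℕ} (hn : 0 < n) (hmn : n ≤ m)
    (A : Matrix (Fin m) (Fin n) ℝ) (hA : A.rank = n)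
    (b : Fin m → ℝ) (c : Fin n → ℝ)
    (x : Fin n → ℝ) (hx : x = (Aᵀ * A)⁻¹ *ᵥ (Aᵀ *ᵥ b + c))
    (r : Fin m → ℝ) (hr : r = b - A *ᵥ x)
    (LT : Matrix (Fin m × Fin n) (Fin n × Fin m) ℝ)
    (hLTperm : ∀ p q, LT p q = if p.1 = q.2 ∧ p.2 = q.1 then 1 else 0)
    (hLT : ∀ E : Matrix (Fin m) (Fin n) ℝ, LT *ᵥ vecC E = vecC Eᵀ)
    (K₁ : Matrix (Fin n) (Fin m × Fin n) ℝ)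
    (hK₁ : K₁ = Matrix.of fun i p => r p.1 * (Aᵀ * A)⁻¹ i p.2)
    (K₂ : Matrix (Fin n) (Fin n × Fin m) ℝ)
    (hK₂ : K₂ = Matrix.of fun i p => x p.1 * ((Aᵀ * A)⁻¹ * Aᵀ) i p.2)
    (M : Matrix (Fin n) ((Fin n × Fin m) ⊕ (Fin m ⊕ Fin n)) ℝ)
    (hMblocks : M = Matrix.of fun i q =>
      Sum.elim (fun p => (K₁ * LT - K₂) i p)
        (Sum.elim (fun j => ((Aᵀ * A)⁻¹ * Aᵀ) i j) (fun j => (Aᵀ * A)⁻¹ i j)) q)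
    (hMmap : ∀ (E : Matrix (Fin m) (Fin n) ℝ) (f : Fin m → ℝ) (g : Fin n → ℝ),
      M *ᵥ Sum.elim (vecC E) (Sum.elim f g) =
        (Aᵀ * A)⁻¹ *ᵥ (Eᵀ *ᵥ r) - ((Aᵀ * A)⁻¹ * Aᵀ) *ᵥ (E *ᵥ x)
          + ((Aᵀ * A)⁻¹ * Aᵀ) *ᵥ f + (Aᵀ * A)⁻¹ *ᵥ g)
    (B : Matrix (Fin n) (Fin n) ℝ)
    (hB : B = ((Aᵀ * A)⁻¹ * Aᵀ) * vecMulVec r x * (Aᵀ * A)⁻¹)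
    (Mbar : Matrix (Fin n) (Fin n) ℝ)
    (hMbar : Mbar = (1 + euclNorm r ^ 2) • ((Aᵀ * A)⁻¹ * (Aᵀ * A)⁻¹)
        + (1 + euclNorm x ^ 2) • (Aᵀ * A)⁻¹
        - (2 : ℝ) • ((1 / 2 : ℝ) • (B + Bᵀ))) :
    M * Mᵀ = Mbar ∧ specNorm M = Real.sqrt (specNorm Mbar) :=
  stmt16_general A hA x r LT hLTperm K₁ hK₁ K₂ hK₂ M hMblocks B hB Mbar hMbar
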